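/- Near an interior point of the segment, the segment Green's function has a logarithmic singularity: writing the segment as {(0,0,z) : z ∈ [−1, 1]} and r = √(x²+y²), let G(x,y,z) = (1/(4π)) ln((r_b + (1−z))/(r_a − (1+z))) with r_a = ‖(x,y,z)−(0,0,−1)‖, r_b = ‖(x,y,z)−(0,0,1)‖; then for fixed z ∈ (−1,1), G(x,y,z) + (1/(2π)) ln r converges as r → 0 to the finite limit (1/(4π)) ln(4(1−z)(1+z)), i.e., G(x,y,z) = −(1/(2π)) ln r + (1/(4π)) ln(2(1−z)·2(1+z)) + o(1). -/
import Mathlib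


open MeasureTheory Filter Set

/-- near an interior point of the segment {(0,0,z) : z ∈ [-1,1]},
the segment Green's function has the logarithmic singularity
G = -(1/(2π)) ln r + (1/(4π)) ln(4(1-z²)) + o(1) as r → 0⁺. -/
theorem stmt_9 (z : ℝ) (hz : z ∈ Set.Ioo (-1 : ℝ) 1)
    (G : ℝ → ℝ)
    (hG : G = fun r => (1 / (4 * Real.pi)) *
        Real.log ((Real.sqrt (r ^ 2 + (z - 1) ^ 2) + 2 + (-1 - z)) /
          (Real.sqrt (r ^ 2 + (z + 1) ^ 2) + (-1 - z)))) :
    Tendsto (fun r => G r + (1 / (2 * Real.pi)) * Real.log r)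
      (nhdsWithin 0 (Set.Ioi 0))
      (nhds ((1 / (4 * Real.pi)) * Real.log (4 * (1 - z ^ 2)))) := by
  obtain ⟨hz1, hz2⟩ := hz
  have h1 : (0:ℝ) < 1 - z := by linarith
  have h2 : (0:ℝ) < 1 + z := by linarith
  have hpi : Real.pi ≠ 0 := Real.pi_ne_zero
  set F : ℝ → ℝ := fun r =>
      (Real.sqrt (r ^ 2 + (z - 1) ^ 2) + (1 - z)) *
      (Real.sqrt (r ^ 2 + (z + 1) ^ 2) + (1 + z)) with hF
  -- value of F at 0
  have hF0 : F 0 = 4 * (1 - z ^ 2) := by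
    have e1 : Real.sqrt ((0:ℝ) ^ 2 + (z - 1) ^ 2) = 1 - z := by
      rw [show (0:ℝ) ^ 2 + (z - 1) ^ 2 = (1 - z) ^ 2 by ring,
        Real.sqrt_sq h1.le]
    have e2 : Real.sqrt ((0:ℝ) ^ 2 + (z + 1) ^ 2) = 1 + z := by
      rw [show (0:ℝ) ^ 2 + (z + 1) ^ 2 = (1 + z) ^ 2 by ring,
        Real.sqrt_sq h2.le]
    simp only [hF, e1, e2]
    ring
  -- continuity of F at 0
  have hFc : ContinuousAt F 0 := by
    apply ContinuousAt.mul
    · exact ((Real.continuous_sqrt.comp (by continuity)).continuousAt).add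
        continuousAt_const
    · exact ((Real.continuous_sqrt.comp (by continuity)).continuousAt).add
        continuousAt_const
  have hF0pos : 0 < F 0 := by rw [hF0]; nlinarith
  -- the limit of the regular part
  have hlim : Tendsto (fun r => (1 / (4 * Real.pi)) * Real.log (F r))
      (nhdsWithin 0 (Set.Ioi 0))
      (nhds ((1 / (4 * Real.pi)) * Real.log (4 * (1 - z ^ 2)))) := by
    have : ContinuousAt (fun r => (1 / (4 * Real.pi)) * Real.log (F r)) 0 :=
      continuousAt_const.mul ((Real.continuousAt_log hF0pos.ne').comp hFc)
    have h2' := this.tendsto.mono_left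
      (nhdsWithin_le_nhds : nhdsWithin (0:ℝ) (Set.Ioi 0) ≤ nhds 0)
    rwa [hF0] at h2'
  -- eventual equality on Ioi 0
  refine hlim.congr' ?_
  filter_upwards [self_mem_nhdsWithin] with r hr
  have hr0 : (0:ℝ) < r := hr
  rw [hG]
  simp only [hF]
  set a := Real.sqrt (r ^ 2 + (z - 1) ^ 2) with ha
  set b := Real.sqrt (r ^ 2 + (z + 1) ^ 2) with hb
  have hasq : a ^ 2 = r ^ 2 + (z - 1) ^ 2 := by
    rw [ha]; exact Real.sq_sqrt (by positivity)
  have hbsq : b ^ 2 = r ^ 2 + (z + 1) ^ 2 := by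
    rw [hb]; exact Real.sq_sqrt (by positivity)
  have ha0 : 0 ≤ a := ha ▸ Real.sqrt_nonneg _
  have hb0 : 0 ≤ b := hb ▸ Real.sqrt_nonneg _
  clear_value a b
  have hbgt : 1 + z < b := by nlinarith [sq_nonneg (b - (1 + z))]
  have hagt : 1 - z ≤ a := by nlinarith [sq_nonneg (a - (1 - z))]
  have hD : b + (-1 - z) = r ^ 2 / (b + (1 + z)) := by
    rw [eq_div_iff (by positivity)]
    nlinarith
  have hN : a + 2 + (-1 - z) = a + (1 - z) := by ring
  rw [hN, hD, Real.log_div (by positivity) (by positivity),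
    Real.log_div (by positivity) (by positivity),
    Real.log_mul (by positivity) (by positivity),
    show r ^ 2 = r * r by ring, Real.log_mul hr0.ne' hr0.ne']
  field_simp
  ring
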